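/- For the function χ(x) = (2/π) ∫₀ˣ (1 − cos y)/y² dy, one has the estimate 1 − χ(x)² < 8/(π|x|) for all x ≠ 0. -/

import Mathlib

open MeasureTheory Real Set Filter Topology

lemma lemB_int {t : ℝ} (ht : 0 < t) :
    IntegrableOn (fun y : ℝ => Real.exp (-(t*y)) * (1 - Real.cos y)) (Ioi 0) := by
  apply Integrable.mono' ((exp_neg_integrableOn_Ioi 0 ht).const_mul 2)
  · exact (((Real.continuous_exp.comp (continuous_const.mul continuous_id).neg).mul
       ((continuous_const.sub Real.continuous_cos))).aestronglyMeasurable)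
  · filter_upwards with y
    rw [norm_mul, Real.norm_eq_abs, Real.norm_eq_abs, abs_of_nonneg (Real.exp_pos _).le,
      abs_of_nonneg (by nlinarith [Real.cos_le_one y] : (0:ℝ) ≤ 1 - Real.cos y), neg_mul,
      mul_comm (2:ℝ)]
    have : 1 - Real.cos y ≤ 2 := by nlinarith [Real.neg_one_le_cos y]
    exact mul_le_mul_of_nonneg_left this (Real.exp_pos _).le

lemma lemB_val {t : ℝ} (ht : 0 < t) :
    ∫ y in Ioi (0:ℝ), Real.exp (-(t*y)) * (1 - Real.cos y) = 1/t - t/(t^2+1) := by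
  set c : ℂ := -(t:ℂ) + Complex.I with hc_def
  have hcre : c.re = -t := by simp [hc_def]
  have hcim : c.im = 1 := by simp [hc_def]
  have hc : c ≠ 0 := fun h => by simpa [hcim] using congrArg Complex.im h
  have ht' : (-(t:ℂ)) ≠ 0 := by simpa using ht.ne'
  have HD : ∀ (a : ℂ), a ≠ 0 → ∀ z : ℂ,
      HasDerivAt (fun w : ℂ => Complex.exp (a*w)/a) (Complex.exp (a*z)) z := by
    intro a ha z
    have h1 : HasDerivAt (fun w : ℂ => a*w) a z := by simpa using (hasDerivAt_id z).const_mul a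
    have h2 := ((Complex.hasDerivAt_exp (a*z)).comp z h1).div_const a
    simpa [mul_div_cancel_right₀ _ ha] using h2
  set F : ℝ → ℝ := fun x => (Complex.exp (-(t:ℂ)*x)/(-(t:ℂ)) - Complex.exp (c*x)/c).re with hF
  have hderiv : ∀ x ∈ Ici (0:ℝ), HasDerivAt F (Real.exp (-(t*x)) * (1 - Real.cos x)) x := by
    intro x _
    have h3 : HasDerivAt (fun z : ℂ => Complex.exp (-(t:ℂ)*z)/(-(t:ℂ)) - Complex.exp (c*z)/c)
        (Complex.exp (-(t:ℂ)*x) - Complex.exp (c*x)) x := (HD _ ht' x).sub (HD c hc x)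
    have h4 := h3.real_of_complex
    have : (Complex.exp (-(t:ℂ)*x) - Complex.exp (c*x)).re
        = Real.exp (-(t*x)) * (1 - Real.cos x) := by
      rw [Complex.sub_re, Complex.exp_re, Complex.exp_re]
      simp [hc_def, Complex.add_re, Complex.add_im, mul_sub]
    rwa [this] at h4
  have hlim : Tendsto F atTop (𝓝 0) := by
    apply squeeze_zero_norm (a := fun x : ℝ => (1/t + 1/‖c‖) * Real.exp (-(t*x)))
    · intro x
      have h1 : ‖F x‖ ≤ ‖(Complex.exp (-(t:ℂ)*x)/(-(t:ℂ)) - Complex.exp (c*x)/c)‖ :=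
        Complex.abs_re_le_norm _
      refine h1.trans ?_
      have e1 : ‖(Complex.exp (-(t:ℂ)*x))‖ = Real.exp (-(t*x)) := by
        rw [Complex.norm_exp]; norm_cast; simp
      have e2 : ‖(Complex.exp (c*x))‖ = Real.exp (-(t*x)) := by
        rw [Complex.norm_exp]
        congr 1
        simp [Complex.mul_re, hcre, hcim]
      calc ‖(Complex.exp (-(t:ℂ)*x)/(-(t:ℂ)) - Complex.exp (c*x)/c)‖
          ≤ ‖(Complex.exp (-(t:ℂ)*x)/(-(t:ℂ)))‖ + ‖(Complex.exp (c*x)/c)‖ :=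
            norm_sub_le _ _
        _ = Real.exp (-(t*x)) / t + Real.exp (-(t*x)) / ‖c‖ := by
            rw [norm_div, norm_div, e1, e2]; simp [abs_of_pos ht]
        _ = (1/t + 1/‖c‖) * Real.exp (-(t*x)) := by ring
    · have h0 : Tendsto (fun x : ℝ => t * x) atTop atTop :=
        (tendsto_const_mul_atTop_of_pos ht).mpr tendsto_id
      have : Tendsto (fun x : ℝ => Real.exp (-(t*x))) atTop (𝓝 0) :=
        Real.tendsto_exp_atBot.comp (tendsto_neg_atTop_atBot.comp h0)
      simpa using this.const_mul (1/t + 1/‖c‖)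
  have := integral_Ioi_of_hasDerivAt_of_tendsto' hderiv (lemB_int ht) hlim
  rw [this]
  have hnormSq : Complex.normSq c = t^2 + 1 := by
    simp [Complex.normSq_apply, hcre, hcim]; ring
  have : F 0 = -(1/t) + t/(t^2+1) := by
    simp only [hF, Complex.ofReal_zero, mul_zero, Complex.exp_zero]
    rw [Complex.sub_re]
    rw [div_eq_mul_inv, div_eq_mul_inv, one_mul, one_mul, Complex.inv_re, Complex.inv_re,
      hnormSq, hcre]
    simp [Complex.normSq_apply]
    field_simp
    ring
  rw [this]; ring

lemma lemA_val {y : ℝ} (hy : 0 < y) :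
    ∫ t in Ioi (0:ℝ), t * Real.exp (-(t*y)) = 1/y^2 := by
  have h := Real.integral_rpow_mul_exp_neg_mul_Ioi (a := 2) (r := y) two_pos hy
  have e : ∀ t : ℝ, t ^ ((2:ℝ) - 1) * Real.exp (-(y*t)) = t * Real.exp (-(t*y)) := by
    intro t
    norm_num [Real.rpow_one, mul_comm y t]
  rw [funext e] at h
  rw [h, Real.Gamma_two, mul_one,
    show ((2:ℝ)) = ((2:ℕ):ℝ) by norm_num, Real.rpow_natCast, div_pow, one_pow]

lemma lemA_int {y : ℝ} (hy : 0 < y) :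
    IntegrableOn (fun t : ℝ => t * Real.exp (-(t*y))) (Ioi 0) := by
  have h := (Real.GammaIntegral_convergent (s := 2) two_pos)
  have h2 : IntegrableOn (fun t : ℝ => Real.exp (-(y*t)) * (y*t) ^ ((2:ℝ)-1)) (Ioi 0) := by
    have := (integrableOn_Ioi_comp_mul_left_iff (fun x => Real.exp (-x) * x ^ ((2:ℝ)-1)) 0 hy).mpr
      (by simpa using h)
    simpa using this
  have h3 := h2.const_mul (1/y)
  apply (IntegrableOn.congr_fun h3 ?_ measurableSet_Ioi)
  intro t ht
  simp only
  rw [show ((2:ℝ)-1) = 1 by norm_num, Real.rpow_one]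
  field_simp

noncomputable def Φ : ℝ → ℝ → ℝ := fun t y => t * Real.exp (-(t*y)) * (1 - Real.cos y)

lemma Φ_cont : Continuous (Function.uncurry Φ) := by
  unfold Φ Function.uncurry
  fun_prop

lemma key_lintegral :
    ∫⁻ y in Ioi (0:ℝ), ENNReal.ofReal ((1 - Real.cos y)/y^2) = ENNReal.ofReal (Real.pi/2) := by
  have hmeas : AEMeasurable (fun p : ℝ × ℝ => ENNReal.ofReal (Φ p.1 p.2))
      ((volume.restrict (Ioi (0:ℝ))).prod (volume.restrict (Ioi (0:ℝ)))) :=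
    (ENNReal.measurable_ofReal.comp Φ_cont.measurable).aemeasurable
  have swap := MeasureTheory.lintegral_lintegral_swap (μ := volume.restrict (Ioi (0:ℝ)))
    (ν := volume.restrict (Ioi (0:ℝ))) (f := fun t y => ENNReal.ofReal (Φ t y)) hmeas
  -- inner y-integral for fixed t > 0
  have hYt : ∀ t ∈ Ioi (0:ℝ), (∫⁻ y in Ioi (0:ℝ), ENNReal.ofReal (Φ t y))
      = ENNReal.ofReal (1/(1+t^2)) := by
    intro t ht
    rw [mem_Ioi] at ht
    have e1 : ∀ y : ℝ, ENNReal.ofReal (Φ t y)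
        = ENNReal.ofReal t * ENNReal.ofReal (Real.exp (-(t*y)) * (1 - Real.cos y)) := by
      intro y
      rw [← ENNReal.ofReal_mul ht.le, Φ, mul_assoc]
    simp_rw [e1]
    rw [lintegral_const_mul' _ _ ENNReal.ofReal_ne_top,
      ← MeasureTheory.ofReal_integral_eq_lintegral_ofReal (lemB_int ht) ?_, lemB_val ht,
      ← ENNReal.ofReal_mul ht.le]
    · congr 1
      field_simp
      ring
    · filter_upwards [self_mem_ae_restrict (measurableSet_Ioi : MeasurableSet (Ioi (0:ℝ)))]
        with y _
      have := Real.cos_le_one y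
      have : (0:ℝ) ≤ 1 - Real.cos y := by linarith
      positivity
  -- inner t-integral for fixed y > 0
  have hTy : ∀ y ∈ Ioi (0:ℝ), (∫⁻ t in Ioi (0:ℝ), ENNReal.ofReal (Φ t y))
      = ENNReal.ofReal ((1 - Real.cos y)/y^2) := by
    intro y hy
    rw [mem_Ioi] at hy
    have hcos : (0:ℝ) ≤ 1 - Real.cos y := by have := Real.cos_le_one y; linarith
    have e1 : ∀ t : ℝ, ENNReal.ofReal (Φ t y)
        = ENNReal.ofReal (t * Real.exp (-(t*y))) * ENNReal.ofReal (1 - Real.cos y) := by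
      intro t
      rw [← ENNReal.ofReal_mul' hcos, Φ]
    simp_rw [e1]
    rw [lintegral_mul_const' _ _ ENNReal.ofReal_ne_top,
      ← MeasureTheory.ofReal_integral_eq_lintegral_ofReal (lemA_int hy) ?_, lemA_val hy,
      ← ENNReal.ofReal_mul' hcos]
    · congr 1
      field_simp
    · filter_upwards [self_mem_ae_restrict (measurableSet_Ioi : MeasurableSet (Ioi (0:ℝ)))]
        with t ht
      rw [mem_Ioi] at ht
      positivity
  calc ∫⁻ y in Ioi (0:ℝ), ENNReal.ofReal ((1 - Real.cos y)/y^2)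
      = ∫⁻ y in Ioi (0:ℝ), ∫⁻ t in Ioi (0:ℝ), ENNReal.ofReal (Φ t y) :=
        (setLIntegral_congr_fun measurableSet_Ioi
          (fun y hy => (hTy y hy).symm))
    _ = ∫⁻ t in Ioi (0:ℝ), ∫⁻ y in Ioi (0:ℝ), ENNReal.ofReal (Φ t y) := swap.symm
    _ = ∫⁻ t in Ioi (0:ℝ), ENNReal.ofReal (1/(1+t^2)) :=
        (setLIntegral_congr_fun measurableSet_Ioi
          (fun t ht => hYt t ht))
    _ = ENNReal.ofReal (Real.pi/2) := by
        rw [← MeasureTheory.ofReal_integral_eq_lintegral_ofReal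
          (integrable_inv_one_add_sq.integrableOn.congr_fun (fun x _ => (one_div _).symm)
            measurableSet_Ioi) ?_]
        · norm_num [integral_Ioi_inv_one_add_sq]
        · filter_upwards with t
          positivity

/-- The integrand `(1 - cos y)/y²`, extended continuously by `1/2` at `y = 0`. -/
noncomputable def chiIntegrand (y : ℝ) : ℝ :=
  if y = 0 then 1 / 2 else (1 - Real.cos y) / y ^ 2

/-- The normalizing function `χ(x) = (2/π) ∫₀ˣ (1 - cos y)/y² dy`. -/
noncomputable def chiFun (x : ℝ) : ℝ :=
  (2 / Real.pi) * ∫ y in (0:ℝ)..x, chiIntegrand y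

lemma chiIntegrand_nonneg (y : ℝ) : 0 ≤ chiIntegrand y := by
  unfold chiIntegrand
  split_ifs
  · norm_num
  · have h1 := Real.cos_le_one y
    have : (0:ℝ) ≤ 1 - Real.cos y := by linarith
    positivity

lemma chiIntegrand_measurable : Measurable chiIntegrand := by
  unfold chiIntegrand
  exact Measurable.ite (measurableSet_singleton 0) measurable_const
    (((measurable_const.sub Real.measurable_cos)).div (measurable_id.pow_const 2))

lemma chiIntegrand_lintegral :
    ∫⁻ y in Ioi (0:ℝ), ENNReal.ofReal (chiIntegrand y) = ENNReal.ofReal (Real.pi/2) := by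
  rw [← key_lintegral]
  apply setLIntegral_congr_fun measurableSet_Ioi
  intro y hy
  rw [mem_Ioi] at hy
  show ENNReal.ofReal (chiIntegrand y) = _
  rw [chiIntegrand, if_neg hy.ne']

lemma chiIntegrand_integrableOn : IntegrableOn chiIntegrand (Ioi (0:ℝ)) := by
  refine ⟨chiIntegrand_measurable.aestronglyMeasurable, ?_⟩
  rw [hasFiniteIntegral_iff_ofReal ?_]
  · rw [chiIntegrand_lintegral]; exact ENNReal.ofReal_lt_top
  · filter_upwards with y using chiIntegrand_nonneg y

lemma chiIntegrand_integral_Ioi : ∫ y in Ioi (0:ℝ), chiIntegrand y = Real.pi/2 := by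
  rw [integral_eq_lintegral_of_nonneg_ae (Filter.Eventually.of_forall fun y =>
    chiIntegrand_nonneg y) chiIntegrand_measurable.aestronglyMeasurable, chiIntegrand_lintegral,
    ENNReal.toReal_ofReal (by positivity)]

lemma chiIntegrand_even (y : ℝ) : chiIntegrand (-y) = chiIntegrand y := by
  unfold chiIntegrand
  rcases eq_or_ne y 0 with h | h
  · simp [h]
  · rw [if_neg (neg_ne_zero.mpr h), if_neg h, Real.cos_neg, neg_pow]
    norm_num

lemma chiFun_neg (x : ℝ) : chiFun (-x) = - chiFun x := by
  unfold chiFun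
  rw [← mul_neg]
  congr 1
  have h := intervalIntegral.integral_comp_neg (a := 0) (b := x) chiIntegrand
  simp only [chiIntegrand_even, neg_zero] at h
  rw [h]
  exact intervalIntegral.integral_symm (-x) 0

lemma tail_eq {x : ℝ} (hx : 0 < x) :
    ∫ y in Ioi x, chiIntegrand y = Real.pi/2 - ∫ y in (0:ℝ)..x, chiIntegrand y := by
  have h1 : IntegrableOn chiIntegrand (Ioc 0 x) :=
    chiIntegrand_integrableOn.mono_set Ioc_subset_Ioi_self
  have h2 : IntegrableOn chiIntegrand (Ioi x) :=
    chiIntegrand_integrableOn.mono_set (Ioi_subset_Ioi hx.le)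
  have h3 := MeasureTheory.setIntegral_union (f := chiIntegrand) (μ := volume)
    Ioc_disjoint_Ioi_same measurableSet_Ioi h1 h2
  rw [Ioc_union_Ioi_eq_Ioi hx.le] at h3
  rw [intervalIntegral.integral_of_le hx.le, ← chiIntegrand_integral_Ioi, h3]
  ring

lemma tail_le {x : ℝ} (hx : 0 < x) : ∫ y in Ioi x, chiIntegrand y ≤ 2/x := by
  have hrpow : ∫ t in Ioi x, (2:ℝ) * t ^ (-2:ℝ) = 2/x := by
    rw [MeasureTheory.integral_const_mul, integral_Ioi_rpow_of_lt (by norm_num) hx]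
    rw [show (-2:ℝ)+1 = -1 by norm_num, Real.rpow_neg_one]
    field_simp
  rw [← hrpow]
  apply setIntegral_mono_on (chiIntegrand_integrableOn.mono_set (Ioi_subset_Ioi hx.le))
    (((integrableOn_Ioi_rpow_of_lt (by norm_num) hx).const_mul 2)) measurableSet_Ioi
  intro y hy
  rw [mem_Ioi] at hy
  have hy0 : 0 < y := hx.trans hy
  rw [chiIntegrand, if_neg hy0.ne', Real.rpow_neg hy0.le, Real.rpow_two]
  have h1 : 1 - Real.cos y ≤ 2 := by have := Real.neg_one_le_cos y; linarith
  rw [div_le_iff₀ (by positivity)]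
  calc 1 - Real.cos y ≤ 2 := h1
    _ = 2 * (y^2)⁻¹ * y^2 := by field_simp

lemma cos_one_null : volume {y : ℝ | Real.cos y = 1} = 0 := by
  have hsub : {y : ℝ | Real.cos y = 1} ⊆ Set.range (fun n : ℤ => (n:ℝ) * (2 * Real.pi)) := by
    intro y hy
    obtain ⟨n, hn⟩ := (Real.cos_eq_one_iff y).mp hy
    exact ⟨n, hn⟩
  exact measure_mono_null hsub (Set.Countable.measure_zero (Set.countable_range _) _)

lemma setIntegral_chi_pos {s : Set ℝ} (hs : MeasurableSet s)
    (hint : IntegrableOn chiIntegrand s) (hpos : 0 < volume s) :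
    0 < ∫ y in s, chiIntegrand y := by
  rw [setIntegral_pos_iff_support_of_nonneg_ae
    (Filter.Eventually.of_forall fun y => chiIntegrand_nonneg y) hint]
  have hsub : s \ {y : ℝ | Real.cos y = 1} ⊆ Function.support chiIntegrand ∩ s := by
    rintro y ⟨hys, hyc⟩
    refine ⟨?_, hys⟩
    simp only [Function.mem_support, chiIntegrand]
    split_ifs with h
    · norm_num
    · have h1 : Real.cos y < 1 := lt_of_le_of_ne (Real.cos_le_one y) hyc
      have : 0 < (1 - Real.cos y) / y^2 := by
        have : (0:ℝ) < 1 - Real.cos y := by linarith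
        positivity
      exact this.ne'
  calc (0:ENNReal) < volume s := hpos
    _ = volume (s \ {y : ℝ | Real.cos y = 1}) := (measure_diff_null cos_one_null).symm
    _ ≤ volume (Function.support chiIntegrand ∩ s) := measure_mono hsub

theorem stmt_7 (x : ℝ) (hx : x ≠ 0) :
    1 - (chiFun x) ^ 2 < 8 / (Real.pi * |x|) := by
  -- reduce to the case x > 0
  have main : ∀ z : ℝ, 0 < z → 1 - (chiFun z) ^ 2 < 8 / (Real.pi * z) := by
    intro z hz
    have hπ := Real.pi_pos
    set J := ∫ y in (0:ℝ)..z, chiIntegrand y with hJ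
    have hJIoc : J = ∫ y in Ioc (0:ℝ) z, chiIntegrand y := intervalIntegral.integral_of_le hz.le
    have hJpos : 0 < J := by
      rw [hJIoc]
      apply setIntegral_chi_pos measurableSet_Ioc
        (chiIntegrand_integrableOn.mono_set Ioc_subset_Ioi_self)
      rw [Real.volume_Ioc]
      simpa using hz
    have hTpos : 0 < Real.pi/2 - J := by
      rw [← tail_eq hz]
      exact setIntegral_chi_pos measurableSet_Ioi
        (chiIntegrand_integrableOn.mono_set (Ioi_subset_Ioi hz.le))
        (by rw [Real.volume_Ioi]; exact ENNReal.zero_lt_top)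
    have hTle : Real.pi/2 - J ≤ 2/z := by rw [← tail_eq hz]; exact tail_le hz
    have hchi : chiFun z = 2/Real.pi * J := rfl
    have h1 : 1 - chiFun z = 2/Real.pi * (Real.pi/2 - J) := by
      rw [hchi]; field_simp
    have h2 : 0 < 1 - chiFun z := by rw [h1]; positivity
    have h3 : 1 - chiFun z ≤ 4/(Real.pi * z) := by
      rw [h1]
      calc 2/Real.pi * (Real.pi/2 - J) ≤ 2/Real.pi * (2/z) := by
            apply mul_le_mul_of_nonneg_left hTle (by positivity)
        _ = 4/(Real.pi * z) := by field_simp; ring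
    have h4 : 0 < chiFun z := by rw [hchi]; positivity
    have h5 : 1 + chiFun z < 2 := by nlinarith
    have h6 : 0 < 1 + chiFun z := by linarith
    calc 1 - (chiFun z)^2 = (1 - chiFun z) * (1 + chiFun z) := by ring
      _ ≤ 4/(Real.pi * z) * (1 + chiFun z) := mul_le_mul_of_nonneg_right h3 h6.le
      _ < 4/(Real.pi * z) * 2 := by
          apply mul_lt_mul_of_pos_left h5 (by positivity)
      _ = 8 / (Real.pi * z) := by ring
  rcases hx.lt_or_gt with h | h
  · have := main (-x) (by linarith)
    rw [chiFun_neg, abs_of_neg h] at *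
    simpa using this
  · rw [abs_of_pos h]
    exact main x h
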